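/- The map sending (p_1, p_2, ..., p_{n-1}, p_n) to (p_{n-1}, p_{n-2}, ..., p_1, p_n) is a bijection between PF-hat_n^1 and PF-hat_n^2. -/

import Mathlib

/-!
Reversing the first `n - 1` coordinates and fixing the last one is an involution of the index
set, and parking functions are closed under permuting coordinates. The involution sends the
coordinate `p_t` (`1 ≤ t ≤ n - 1`) to position `n - t`, so the defining conditions of
`PF-hat_n^2` on the image are literally those of `PF-hat_n^1` for `t ≤ n - 1`; the remaining
conditions of `PF-hat_n^1`, at `t = n`, hold for every parking function since `p_n < n`.
-/

/-- `p` is a parking function of length `n`: some nondecreasing rearrangement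
`q_1 ≤ ⋯ ≤ q_n` of `p` satisfies `q_j < j` (0-based: `q_i ≤ i`). -/
def IsParkingFn {n : ℕ} (p : Fin n → ℕ) : Prop :=
  ∃ τ : Equiv.Perm (Fin n), (Monotone fun i => p (τ i)) ∧ ∀ i : Fin n, p (τ i) ≤ (i : ℕ)

theorem Function.Involutive.bijOn_of_forall_mem_iff {α : Type*} {f : α → α}
    (hf : Function.Involutive f) {s t : Set α} (h : ∀ x, f x ∈ t ↔ x ∈ s) : Set.BijOn f s t :=
  Set.InvOn.bijOn ⟨fun x _ => hf x, fun x _ => hf x⟩ (fun x hx => (h x).2 hx)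
    (fun x hx => (h (f x)).1 (by rwa [hf x]))

namespace IsParkingFn

variable {n : ℕ} {p : Fin n → ℕ}

theorem comp_perm (h : IsParkingFn p) (σ : Equiv.Perm (Fin n)) : IsParkingFn (p ∘ σ) := by
  obtain ⟨τ, hmono, hle⟩ := h
  exact ⟨τ.trans σ.symm, by simpa using hmono, by simpa using hle⟩

theorem comp_involutive_iff {σ : Fin n → Fin n} (hσ : Function.Involutive σ) :
    IsParkingFn (p ∘ σ) ↔ IsParkingFn p := by
  refine ⟨fun h => ?_, fun h => h.comp_perm (hσ.toPerm σ)⟩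
  simpa [Function.comp_assoc, hσ.comp_self] using h.comp_perm (hσ.toPerm σ)

theorem apply_lt (h : IsParkingFn p) (k : Fin n) : p k < n := by
  obtain ⟨τ, -, hle⟩ := h
  simpa using (hle (τ.symm k)).trans_lt (τ.symm k).isLt

end IsParkingFn

def revInit (n : ℕ) (i : Fin n) : Fin n :=
  if (i : ℕ) = n - 1 then i else ⟨n - 2 - i, (Nat.sub_le _ _).trans_lt (Nat.sub_lt i.pos two_pos)⟩

theorem revInit_involutive (n : ℕ) : Function.Involutive (revInit n) := by
  intro i
  unfold revInit
  split_ifs <;> ext <;> simp_all <;> omega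

theorem revInit_last {n : ℕ} (h : n - 1 < n) : revInit n ⟨n - 1, h⟩ = ⟨n - 1, h⟩ :=
  if_pos rfl

theorem revInit_sub_one_sub {n t : ℕ} (ht : 1 ≤ t) (htn : t ≤ n - 1) (h : n - 1 - t < n) :
    revInit n ⟨n - 1 - t, h⟩ = ⟨t - 1, by omega⟩ := by
  rw [revInit, if_neg (show n - 1 - t ≠ n - 1 by omega)]
  ext
  simp only
  omega

/-- `PF-hat_n^1`, with the 1-based index `t` of the paper written as `i + 1`. -/
def PFhat1 (n : ℕ) (hn : 1 ≤ n) : Set (Fin n → ℕ) :=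
  {p | IsParkingFn p ∧ (∀ i : Fin n, p i ≤ (i : ℕ) + 1) ∧
    ∀ i : Fin n, p i = (i : ℕ) + 1 → p ⟨n - 1, Nat.sub_lt hn one_pos⟩ < (i : ℕ) + 1}

/-- `PF-hat_n^2`; the paper's `p_{n-t}` is `p ⟨n - 1 - t, _⟩`. -/
def PFhat2 (n : ℕ) (hn : 1 ≤ n) : Set (Fin n → ℕ) :=
  {p | IsParkingFn p ∧
    (∀ t : ℕ, 1 ≤ t → t ≤ n - 1 →
      p ⟨n - 1 - t, (Nat.sub_le _ _).trans_lt (Nat.sub_lt hn one_pos)⟩ ≤ t) ∧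
    ∀ i : ℕ, 1 ≤ i → i ≤ n - 1 →
      p ⟨n - 1 - i, (Nat.sub_le _ _).trans_lt (Nat.sub_lt hn one_pos)⟩ = i →
        p ⟨n - 1, Nat.sub_lt hn one_pos⟩ < i}

section PFhat

variable {n : ℕ} {hn : 1 ≤ n} {p : Fin n → ℕ}

theorem mem_PFhat1_iff_of_isParkingFn (hp : IsParkingFn p) :
    p ∈ PFhat1 n hn ↔ ∀ t : ℕ, (ht : 1 ≤ t) → (htn : t ≤ n - 1) →
      p ⟨t - 1, by omega⟩ ≤ t ∧
        (p ⟨t - 1, by omega⟩ = t → p ⟨n - 1, Nat.sub_lt hn one_pos⟩ < t) := by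
  simp only [PFhat1, Set.mem_ofPred_eq, hp, true_and, ← forall_and]
  constructor
  · intro h t ht htn
    simpa [Nat.sub_add_cancel ht] using h ⟨t - 1, by omega⟩
  · intro h i
    by_cases hi : (i : ℕ) = n - 1
    · have := hp.apply_lt i
      omega
    · simpa using h (i + 1) (by omega) (by omega)

theorem comp_revInit_mem_PFhat2_iff : p ∘ revInit n ∈ PFhat2 n hn ↔ p ∈ PFhat1 n hn := by
  by_cases hp : IsParkingFn p
  · simp only [mem_PFhat1_iff_of_isParkingFn hp, PFhat2, Set.mem_ofPred_eq, Function.comp_apply,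
      IsParkingFn.comp_involutive_iff (revInit_involutive n), hp, true_and, revInit_last,
      ← forall_and]
    refine forall_congr' fun t => forall_congr' fun ht => forall_congr' fun htn => ?_
    rw [revInit_sub_one_sub ht htn]
  · simp [PFhat1, PFhat2, IsParkingFn.comp_involutive_iff (revInit_involutive n), hp]

theorem bijOn_comp_revInit : Set.BijOn (· ∘ revInit n) (PFhat1 n hn) (PFhat2 n hn) := by
  have hinv : Function.Involutive (· ∘ revInit n : (Fin n → ℕ) → Fin n → ℕ) := fun p => by
    simp [Function.comp_assoc, (revInit_involutive n).comp_self]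
  exact hinv.bijOn_of_forall_mem_iff fun _ => comp_revInit_mem_PFhat2_iff

end PFhat

/-- The map `(p_1, …, p_{n-1}, p_n) ↦ (p_{n-1}, …, p_1, p_n)` (reversing the first `n-1`
coordinates) is a bijection from `PF-hat_n^1` onto `PF-hat_n^2`, where
`PF-hat_n^1 = {p parking : p_t ≤ t ∀t, and p_i = i ⟹ p_n < i}` and
`PF-hat_n^2 = {p parking : p_{n-t} ≤ t ∀ 1 ≤ t ≤ n-1, and p_{n-i} = i ⟹ p_n < i}`
(1-based indexing; the 0-based index `i` corresponds to the 1-based `i+1`). -/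
theorem bijOn_PFhat1_PFhat2 (n : ℕ) (hn : 1 ≤ n) :
    Set.BijOn
      (fun (p : Fin n → ℕ) => fun i : Fin n =>
        if (i : ℕ) = n - 1 then p i else p ⟨n - 2 - (i : ℕ), by omega⟩)
      {p : Fin n → ℕ | IsParkingFn p ∧ (∀ i : Fin n, p i ≤ (i : ℕ) + 1) ∧
        ∀ i : Fin n, p i = (i : ℕ) + 1 → p ⟨n - 1, by omega⟩ < (i : ℕ) + 1}
      {p : Fin n → ℕ | IsParkingFn p ∧
        (∀ t : ℕ, 1 ≤ t → t ≤ n - 1 → p ⟨n - 1 - t, by omega⟩ ≤ t) ∧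
        ∀ i : ℕ, 1 ≤ i → i ≤ n - 1 → p ⟨n - 1 - i, by omega⟩ = i →
          p ⟨n - 1, by omega⟩ < i} := by
  refine (bijOn_comp_revInit (hn := hn)).congr fun p _ => funext fun i => ?_
  simp only [revInit, Function.comp_apply, apply_ite p]
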